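/- For (μ,g) ∈ k^× × G(V̂^DR), where G(V̂^DR) is the group of group-like elements of the completed free Hopf algebra k⟨⟨e₀,e₁⟩⟩, the operation (μ,g) ⊛ (μ',g') := (μμ', aut_{(μ,g)}(g')·g), where aut_{(μ,g)} is the topological algebra automorphism with e₀ ↦ g(μe₀)g^{-1}, e₁ ↦ μe₁, defines a group structure on G^DR(k) := k^× × G(V̂^DR). -/

import Mathlib

/-- Words in the letters `e₀, e₁`. -/
abbrev Word := List (Fin 2)

/-- The completed free associative algebra `V̂^DR = k⟨⟨e₀,e₁⟩⟩`: a
noncommutative formal power series is the function assigning to each word its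
coefficient, with the convolution product. -/
def NCS (k : Type) : Type := Word → k

namespace NCS

variable {k : Type} [CommRing k]

instance : AddCommGroup (NCS k) := Pi.addCommGroup

instance : Module k (NCS k) := Pi.module _ _ _

instance : Mul (NCS k) :=
  ⟨fun f g => fun w => ∑ i ∈ Finset.range (w.length + 1), f (w.take i) * g (w.drop i)⟩

instance : One (NCS k) := ⟨fun w => if w = [] then 1 else 0⟩

noncomputable instance : Ring (NCS k) :=
  { (inferInstance : AddCommGroup (NCS k)),
    (inferInstance : Mul (NCS k)), (inferInstance : One (NCS k)) with
    left_distrib := by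
      intro a b c; funext w
      show (∑ i ∈ Finset.range (w.length + 1), a (w.take i) * (b (w.drop i) + c (w.drop i)))
        = (∑ i ∈ Finset.range (w.length + 1), a (w.take i) * b (w.drop i))
          + (∑ i ∈ Finset.range (w.length + 1), a (w.take i) * c (w.drop i))
      simp [mul_add, Finset.sum_add_distrib]
    right_distrib := by
      intro a b c; funext w
      show (∑ i ∈ Finset.range (w.length + 1), (a (w.take i) + b (w.take i)) * c (w.drop i))
        = (∑ i ∈ Finset.range (w.length + 1), a (w.take i) * c (w.drop i))
          + (∑ i ∈ Finset.range (w.length + 1), b (w.take i) * c (w.drop i))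
      simp [add_mul, Finset.sum_add_distrib]
    zero_mul := by
      intro a; funext w
      show (∑ i ∈ Finset.range (w.length + 1), (0 : k) * a (w.drop i)) = 0
      simp
    mul_zero := by
      intro a; funext w
      show (∑ i ∈ Finset.range (w.length + 1), a (w.take i) * (0 : k)) = 0
      simp
    mul_assoc := by
      intro a b c; funext w
      show (∑ j ∈ Finset.range (w.length + 1),
        (∑ i ∈ Finset.range ((w.take j).length + 1),
          a ((w.take j).take i) * b ((w.take j).drop i)) * c (w.drop j))
        = ∑ i ∈ Finset.range (w.length + 1),
            a (w.take i) * (∑ j ∈ Finset.range ((w.drop i).length + 1),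
              b ((w.drop i).take j) * c ((w.drop i).drop j))
      set n := w.length with hn
      calc
        (∑ j ∈ Finset.range (n + 1),
          (∑ i ∈ Finset.range ((w.take j).length + 1),
            a ((w.take j).take i) * b ((w.take j).drop i)) * c (w.drop j))
            = ∑ j ∈ Finset.range (n + 1), ∑ i ∈ Finset.range (j + 1),
                a (w.take i) * (b ((w.drop i).take (j - i)) * c ((w.drop i).drop (j - i))) := by
              refine Finset.sum_congr rfl fun j hj => ?_
              rw [Finset.mem_range] at hj
              have hj' : j ≤ n := by omega
              have hlen : (w.take j).length = j := by
                rw [List.length_take]; omega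
              rw [Finset.sum_mul, hlen]
              refine Finset.sum_congr rfl fun i hi => ?_
              rw [Finset.mem_range] at hi
              have hi' : i ≤ j := by omega
              rw [List.take_take, min_eq_left hi', List.drop_take, List.drop_drop,
                Nat.add_sub_cancel' hi', mul_assoc]
        _ = ∑ i ∈ Finset.range (n + 1), ∑ j ∈ Finset.Ico i (n + 1),
                a (w.take i) * (b ((w.drop i).take (j - i)) * c ((w.drop i).drop (j - i))) := by
              simp only [Finset.range_eq_Ico]
              rw [Finset.sum_Ico_Ico_comm]
        _ = ∑ i ∈ Finset.range (n + 1),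
            a (w.take i) * (∑ j ∈ Finset.range ((w.drop i).length + 1),
              b ((w.drop i).take j) * c ((w.drop i).drop j)) := by
              refine Finset.sum_congr rfl fun i hi => ?_
              rw [Finset.mem_range] at hi
              have hi' : i ≤ n := by omega
              rw [Finset.sum_Ico_eq_sum_range, Finset.mul_sum]
              have h1 : n + 1 - i = (w.drop i).length + 1 := by
                rw [List.length_drop]; omega
              rw [h1]
              refine Finset.sum_congr rfl fun j _ => ?_
              rw [Nat.add_sub_cancel_left]
    one_mul := by
      intro a; funext w
      show (∑ i ∈ Finset.range (w.length + 1),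
        (if w.take i = [] then (1 : k) else 0) * a (w.drop i)) = a w
      rw [Finset.sum_eq_single 0]
      · simp
      · intro i hi hne
        rcases Nat.exists_eq_succ_of_ne_zero hne with ⟨j, rfl⟩
        rw [Finset.mem_range] at hi
        rw [if_neg, zero_mul]
        intro h
        rcases List.take_eq_nil_iff.mp h with h' | h'
        · omega
        · subst h'; simp at hi
      · simp
    mul_one := by
      intro a; funext w
      show (∑ i ∈ Finset.range (w.length + 1),
        a (w.take i) * (if w.drop i = [] then (1 : k) else 0)) = a w
      rw [Finset.sum_eq_single w.length]
      · simp
      · intro i hi hne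
        rw [Finset.mem_range] at hi
        rw [if_neg, mul_zero]
        intro h
        rw [List.drop_eq_nil_iff] at h
        omega
      · simp }

noncomputable instance : Algebra k (NCS k) :=
  Algebra.ofModule
    (by
      intro r x y; funext w
      show (∑ i ∈ Finset.range (w.length + 1), (r • x (w.take i)) * y (w.drop i))
        = r • ∑ i ∈ Finset.range (w.length + 1), x (w.take i) * y (w.drop i)
      simp [Finset.mul_sum, mul_assoc])
    (by
      intro r x y; funext w
      show (∑ i ∈ Finset.range (w.length + 1), x (w.take i) * (r • y (w.drop i)))
        = r • ∑ i ∈ Finset.range (w.length + 1), x (w.take i) * y (w.drop i)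
      simp [Finset.mul_sum, mul_left_comm])

/-- The generators `e₀, e₁`. -/
def e (i : Fin 2) : NCS k := fun w => if w = [i] then 1 else 0

end NCS

/-- Shuffles of two words, with multiplicity. -/
def shuffleW : Word → Word → Multiset Word
  | [], v => {v}
  | u, [] => {u}
  | a :: u, b :: v =>
      ((shuffleW u (b :: v)).map (a :: ·)) + ((shuffleW (a :: u) v).map (b :: ·))
  termination_by u v => u.length + v.length

variable {k : Type} [CommRing k]

/-- Group-likeness for the coproduct `Δ^{V,DR}` in which `e₀, e₁` are
primitive, expressed on coefficients via the dual shuffle product: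
`Δ̂(g) = g ⊗ g` and `ε(g) = 1`. -/
def IsGrouplike (g : NCS k) : Prop :=
  g [] = 1 ∧ ∀ u v : Word, ((shuffleW u v).map g).sum = g u * g v

/-- Substitution `e_i ↦ a_i` (for `a_i` without constant term): the continuous
algebra endomorphism of `k⟨⟨e₀,e₁⟩⟩` determined by `e_i ↦ a_i`. -/
noncomputable def substE (a : Fin 2 → NCS k) (f : NCS k) : NCS k := fun w =>
  ∑ r ∈ Finset.range (w.length + 1),
    ∑ v : Fin r → Fin 2, f (List.ofFn v) * (((List.ofFn v).map a).prod : NCS k) w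

/-- `aut^{(1)}_{(μ,g)}`: the topological algebra automorphism of `k⟨⟨e₀,e₁⟩⟩`
with `e₀ ↦ g(μe₀)g⁻¹` and `e₁ ↦ μe₁`. -/
noncomputable def aut1 (μ : k) (g : NCS k) : NCS k → NCS k :=
  substE (fun i => if i = 0 then g * (μ • NCS.e 0) * Ring.inverse g else μ • NCS.e 1)

/-- `aut^{(10)}_{(μ,g)}(a) = aut^{(1)}_{(μ,g)}(a) · g`. -/
noncomputable def aut10 (μ : k) (g : NCS k) (f : NCS k) : NCS k := aut1 μ g f * g

/-- The set `G^DR(k) = k^× × 𝒢(V̂^DR)`. -/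
def GDR (k : Type) [CommRing k] : Set (k × NCS k) :=
  {p | IsUnit p.1 ∧ IsGrouplike p.2}

/-- The law `(μ,g) ⊛ (μ',g') = (μμ', aut^{(10)}_{(μ,g)}(g'))`. -/
noncomputable def lawDR (p q : k × NCS k) : k × NCS k :=
  (p.1 * q.1, aut10 p.1 p.2 q.2)



open Finset

variable {k : Type} [CommRing k]

namespace NCS

lemma mul_apply (f g : NCS k) (w : Word) :
    (f * g) w = ∑ i ∈ Finset.range (w.length + 1), f (w.take i) * g (w.drop i) := rfl

lemma one_apply (w : Word) : (1 : NCS k) w = if w = [] then 1 else 0 := rfl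

lemma smul_apply (c : k) (f : NCS k) (w : Word) : (c • f) w = c * f w := rfl

lemma add_apply (f g : NCS k) (w : Word) : (f + g) w = f w + g w := rfl

lemma mul_apply_nil (f g : NCS k) : (f * g) [] = f [] * g [] := by
  simp [mul_apply]

lemma mul_apply_single (f g : NCS k) (j : Fin 2) :
    (f * g) [j] = f [] * g [j] + f [j] * g [] := by
  simp [mul_apply, Finset.sum_range_succ]

end NCS

/-- abbreviation for the product of letters -/
noncomputable def pr (a : Fin 2 → NCS k) (l : Word) : NCS k := ((l.map a).prod : NCS k)

lemma pr_nil (a : Fin 2 → NCS k) : pr a [] = 1 := rfl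

lemma pr_cons (a : Fin 2 → NCS k) (i : Fin 2) (l : Word) :
    pr a (i :: l) = a i * pr a l := by simp [pr]

lemma pr_append (a : Fin 2 → NCS k) (l₁ l₂ : Word) :
    pr a (l₁ ++ l₂) = pr a l₁ * pr a l₂ := by simp [pr]

lemma pr_single (a : Fin 2 → NCS k) (i : Fin 2) : pr a [i] = a i := by simp [pr]

/-- constant-free -/
def CF (a : Fin 2 → NCS k) : Prop := ∀ i, a i [] = 0

lemma pr_eq_zero {a : Fin 2 → NCS k} (ha : CF a) :
    ∀ (l : Word) (w : Word), w.length < l.length → pr a l w = 0 := by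
  intro l
  induction l with
  | nil => intro w hw; simp at hw
  | cons i l ih =>
    intro w hw
    rw [pr_cons, NCS.mul_apply]
    refine Finset.sum_eq_zero fun j hj => ?_
    rcases Nat.eq_zero_or_pos j with rfl | hj0
    · simp [ha i]
    · have hj' := Finset.mem_range.1 hj
      have : (w.drop j).length < l.length := by
        rw [List.length_drop]; simp only [List.length_cons] at hw; omega
      rw [ih _ this, mul_zero]

/-- Words of length exactly `r`. -/
noncomputable def Lw (r : ℕ) : Finset Word :=
  Finset.image (fun v : Fin r → Fin 2 => List.ofFn v) Finset.univ

lemma mem_Lw {r : ℕ} {l : Word} : l ∈ Lw r ↔ l.length = r := by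
  constructor
  · rintro h
    rcases Finset.mem_image.1 h with ⟨v, _, rfl⟩
    simp
  · rintro rfl
    refine Finset.mem_image.2 ⟨fun i => l.get i, Finset.mem_univ _, ?_⟩
    simp [List.ofFn_get]

/-- Words of length ≤ n -/
noncomputable def WLe (n : ℕ) : Finset Word := (Finset.range (n+1)).biUnion Lw

lemma mem_WLe {n : ℕ} {l : Word} : l ∈ WLe n ↔ l.length ≤ n := by
  simp only [WLe, Finset.mem_biUnion, Finset.mem_range, mem_Lw]
  constructor
  · rintro ⟨r, hr, rfl⟩; omega
  · intro h; exact ⟨l.length, by omega, rfl⟩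

lemma sum_Lw (r : ℕ) (F : Word → k) :
    ∑ l ∈ Lw r, F l = ∑ v : Fin r → Fin 2, F (List.ofFn v) := by
  rw [Lw, Finset.sum_image]
  intro x _ y _ h
  exact List.ofFn_injective h

lemma substE_apply' (a : Fin 2 → NCS k) (f : NCS k) (w : Word) :
    substE a f w = ∑ l ∈ WLe w.length, f l * pr a l w := by
  rw [substE, WLe, Finset.sum_biUnion]
  · exact Finset.sum_congr rfl fun r _ => by rw [sum_Lw]; rfl
  · intro r _ s _ hrs
    apply Finset.disjoint_left.2
    intro l hl hl'
    exact hrs (by rw [← mem_Lw.1 hl, mem_Lw.1 hl'])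

lemma substE_apply_le {a : Fin 2 → NCS k} (ha : CF a) (f : NCS k) {w : Word} {n : ℕ}
    (hn : w.length ≤ n) :
    substE a f w = ∑ l ∈ WLe n, f l * pr a l w := by
  rw [substE_apply']
  refine Finset.sum_subset (fun l hl => mem_WLe.2 (le_trans (mem_WLe.1 hl) hn)) ?_
  intro l hl hl'
  rw [pr_eq_zero ha l w (by have := mem_WLe.1 hl; simp [mem_WLe] at hl'; omega), mul_zero]

lemma substE_apply_nil (a : Fin 2 → NCS k) (f : NCS k) : substE a f [] = f [] := by
  rw [substE_apply', List.length_nil]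
  rw [show WLe 0 = {[]} from Finset.ext fun l => by
    simp [mem_WLe, List.length_eq_zero_iff, Finset.mem_singleton]]
  simp [pr_nil, NCS.one_apply]

lemma substE_one (a : Fin 2 → NCS k) : substE a (1 : NCS k) = 1 := by
  funext w
  rw [substE_apply']
  rw [Finset.sum_eq_single_of_mem ([] : Word) (mem_WLe.2 (by simp))]
  · simp [NCS.one_apply, pr_nil]
  · intro l _ hl
    simp [NCS.one_apply, hl]

lemma substE_smul (a : Fin 2 → NCS k) (c : k) (f : NCS k) :
    substE a (c • f) = c • substE a f := by
  funext w
  rw [substE_apply', NCS.smul_apply, substE_apply', Finset.mul_sum]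
  exact Finset.sum_congr rfl fun l _ => by rw [NCS.smul_apply, mul_assoc]

lemma substE_e {a : Fin 2 → NCS k} (ha : CF a) (i : Fin 2) : substE a (NCS.e i) = a i := by
  funext w
  rw [substE_apply']
  cases w with
  | nil =>
    rw [List.length_nil, show WLe 0 = {[]} from Finset.ext fun l => by
      simp [mem_WLe, List.length_eq_zero_iff, Finset.mem_singleton]]
    simp [NCS.e, ha i]
  | cons c w' =>
    rw [Finset.sum_eq_single_of_mem ([i] : Word) (mem_WLe.2 (by simp))]
    · simp [NCS.e, pr_single]
    · intro l _ hl
      simp [NCS.e, hl]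


open Finset

variable {k : Type} [CommRing k]

lemma substE_mul {a : Fin 2 → NCS k} (ha : CF a) (f g : NCS k) :
    substE a (f * g) = substE a f * substE a g := by
  funext w
  set n := w.length with hn
  have RHS : (substE a f * substE a g) w
      = ∑ l₁ ∈ WLe n, ∑ l₂ ∈ WLe n, f l₁ * g l₂ * pr a (l₁ ++ l₂) w := by
    rw [NCS.mul_apply]
    have : ∀ j ∈ Finset.range (n+1),
        substE a f (w.take j) * substE a g (w.drop j)
        = ∑ l₁ ∈ WLe n, ∑ l₂ ∈ WLe n,
            (f l₁ * pr a l₁ (w.take j)) * (g l₂ * pr a l₂ (w.drop j)) := by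
      intro j hj
      rw [substE_apply_le (n := n) ha f (by rw [List.length_take]; omega),
        substE_apply_le (n := n) ha g (by rw [List.length_drop]; omega), Finset.sum_mul_sum]
    rw [Finset.sum_congr rfl this, Finset.sum_comm]
    refine Finset.sum_congr rfl fun l₁ _ => ?_
    rw [Finset.sum_comm]
    refine Finset.sum_congr rfl fun l₂ _ => ?_
    rw [pr_append, NCS.mul_apply, Finset.mul_sum]
    exact Finset.sum_congr rfl fun j _ => by ring
  rw [RHS, substE_apply' a (f*g) w]
  have LHS : ∑ l ∈ WLe n, (f*g) l * pr a l w
      = ∑ x ∈ (WLe n).sigma (fun l => Finset.range (l.length + 1)),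
          f (x.1.take x.2) * g (x.1.drop x.2) * pr a x.1 w := by
    rw [Finset.sum_sigma]
    exact Finset.sum_congr rfl fun l _ => by rw [NCS.mul_apply, Finset.sum_mul]
  rw [LHS]
  rw [← Finset.sum_product']
  have hsplit : ∑ p ∈ (WLe n) ×ˢ (WLe n), f p.1 * g p.2 * pr a (p.1 ++ p.2) w
      = ∑ p ∈ ((WLe n) ×ˢ (WLe n)).filter (fun p => p.1.length + p.2.length ≤ n),
          f p.1 * g p.2 * pr a (p.1 ++ p.2) w := by
    refine (Finset.sum_subset (Finset.filter_subset _ _) ?_).symm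
    intro p hp hp'
    rw [Finset.mem_filter, not_and] at hp'
    have : w.length < (p.1 ++ p.2).length := by
      rw [List.length_append]; have := hp' hp; omega
    rw [pr_eq_zero ha _ _ this, mul_zero]
  rw [hsplit]
  refine Finset.sum_nbij' (fun x => (x.1.take x.2, x.1.drop x.2))
    (fun p => ⟨p.1 ++ p.2, p.1.length⟩) ?_ ?_ ?_ ?_ ?_
  · rintro ⟨l, i⟩ hx
    simp only [Finset.mem_sigma, Finset.mem_range, mem_WLe] at hx
    obtain ⟨hl', hi⟩ := hx
    dsimp only
    refine Finset.mem_filter.2 ⟨Finset.mem_product.2 ⟨mem_WLe.2 ?_, mem_WLe.2 ?_⟩, ?_⟩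
    · rw [List.length_take]; omega
    · rw [List.length_drop]; omega
    · simp only [List.length_take, List.length_drop]; omega
  · rintro ⟨l₁, l₂⟩ hp
    rw [Finset.mem_filter, Finset.mem_product] at hp
    obtain ⟨⟨h1, h2⟩, h3⟩ := hp
    dsimp only at h3 ⊢
    refine Finset.mem_sigma.2 ⟨mem_WLe.2 (by rw [List.length_append]; exact h3), ?_⟩
    simp only [Finset.mem_range, List.length_append]; omega
  · rintro ⟨l, i⟩ hx
    simp only [Finset.mem_sigma, Finset.mem_range, mem_WLe] at hx
    obtain ⟨hl, hi⟩ := hx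
    have hi' : i ≤ l.length := by omega
    dsimp only
    simp [List.take_append_drop, List.length_take, Nat.min_eq_left hi']
  · rintro ⟨l₁, l₂⟩ _
    dsimp only
    simp [List.take_left, List.drop_left]
  · rintro ⟨l, i⟩ hx
    dsimp only
    rw [List.take_append_drop]

lemma pr_e_apply : ∀ (l : Word) (w : Word), pr (NCS.e : Fin 2 → NCS k) l w
    = if w = l then 1 else 0 := by
  intro l
  induction l with
  | nil =>
    intro w; rw [pr_nil, NCS.one_apply]
  | cons i l ih =>
    intro w
    rw [pr_cons, NCS.mul_apply]
    cases w with
    | nil => simp [NCS.e]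
    | cons c w' =>
      rw [Finset.sum_eq_single_of_mem 1 (Finset.mem_range.2 (by simp))]
      · simp only [List.take_succ_cons, List.take_zero, List.drop_succ_cons, List.drop_zero,
          NCS.e, ih]
        by_cases h1 : c = i <;> by_cases h2 : w' = l <;> simp [h1, h2]
      · intro j hj hj1
        rcases Nat.eq_zero_or_pos j with rfl | hj0
        · simp [NCS.e]
        · have hj2 : 2 ≤ j := by omega
          have : (List.take j (c :: w')).length = j := by
            rw [List.length_take]
            rw [Finset.mem_range] at hj
            omega
          have hne : List.take j (c :: w') ≠ [i] := by
            intro hcon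
            rw [hcon] at this
            simp at this
            omega
          have hz : (NCS.e i : NCS k) (List.take j (c :: w')) = 0 := by simp [NCS.e, hne]
          rw [hz, zero_mul]

lemma substE_id (f : NCS k) : substE (NCS.e : Fin 2 → NCS k) f = f := by
  funext w
  rw [substE_apply']
  rw [Finset.sum_eq_single_of_mem w (mem_WLe.2 le_rfl)]
  · rw [pr_e_apply, if_pos rfl, mul_one]
  · intro l _ hl
    rw [pr_e_apply, if_neg (by exact fun h => hl h.symm), mul_zero]

lemma CF_substE {a b : Fin 2 → NCS k} (hb : CF b) : CF (fun i => substE a (b i)) := by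
  intro i
  show substE a (b i) [] = 0
  rw [substE_apply_nil, hb i]

lemma pr_substE {a : Fin 2 → NCS k} (ha : CF a) (b : Fin 2 → NCS k) (l : Word) :
    pr (fun i => substE a (b i)) l = substE a (pr b l) := by
  induction l with
  | nil => rw [pr_nil, pr_nil, substE_one]
  | cons i l ih => rw [pr_cons, pr_cons, ih, substE_mul ha]

lemma substE_comp {a b : Fin 2 → NCS k} (ha : CF a) (hb : CF b) (f : NCS k) :
    substE (fun i => substE a (b i)) f = substE a (substE b f) := by
  funext w
  set n := w.length with hn
  rw [substE_apply', substE_apply']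
  have : ∀ l ∈ WLe n, f l * substE a (pr b l) w
      = ∑ m ∈ WLe n, f l * (pr b l m * pr a m w) := by
    intro l _
    rw [substE_apply' a (pr b l) w, Finset.mul_sum]
  calc ∑ l ∈ WLe n, f l * pr (fun i => substE a (b i)) l w
      = ∑ l ∈ WLe n, ∑ m ∈ WLe n, f l * (pr b l m * pr a m w) := by
        refine Finset.sum_congr rfl fun l hl => ?_
        rw [pr_substE ha, this l hl]
    _ = ∑ m ∈ WLe n, substE b f m * pr a m w := by
        rw [Finset.sum_comm]
        refine Finset.sum_congr rfl fun m hm => ?_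
        rw [substE_apply_le hb f (mem_WLe.1 hm), Finset.sum_mul]
        exact Finset.sum_congr rfl fun l _ => by ring


open Finset

variable {k : Type} [CommRing k]

noncomputable def linvW (f : NCS k) : Word → k
  | w =>
    if h : w = [] then 1 else
      - ∑ i ∈ (Finset.range w.length).attach,
          f (w.take (i.1 + 1)) * linvW f (w.drop (i.1 + 1))
termination_by w => w.length
decreasing_by
  have hi := Finset.mem_range.1 i.2
  have : w.length ≠ 0 := fun hz => h (List.length_eq_zero_iff.1 hz)
  simp only [List.length_drop]
  show w.length - (↑i + 1) < w.length
  omega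

noncomputable def rinvW (f : NCS k) : Word → k
  | w =>
    if h : w = [] then 1 else
      - ∑ i ∈ (Finset.range w.length).attach,
          rinvW f (w.take i.1) * f (w.drop i.1)
termination_by w => w.length
decreasing_by
  have hi := Finset.mem_range.1 i.2
  simp only [List.length_take]
  show min (↑i) w.length < w.length
  omega

noncomputable def linv (f : NCS k) : NCS k := linvW f

noncomputable def rinv (f : NCS k) : NCS k := rinvW f

lemma linvW_eq (f : NCS k) (w : Word) :
    linvW f w = if w = [] then 1 else
      - ∑ i ∈ Finset.range w.length, f (w.take (i + 1)) * linvW f (w.drop (i + 1)) := by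
  rw [linvW.eq_def]
  dsimp only
  split_ifs with h
  · rfl
  · rw [neg_inj]
    exact Finset.sum_attach (Finset.range w.length)
      (fun i => f (w.take (i + 1)) * linvW f (w.drop (i + 1)))

lemma rinvW_eq (f : NCS k) (w : Word) :
    rinvW f w = if w = [] then 1 else
      - ∑ i ∈ Finset.range w.length, rinvW f (w.take i) * f (w.drop i) := by
  rw [rinvW.eq_def]
  dsimp only
  split_ifs with h
  · rfl
  · rw [neg_inj]
    exact Finset.sum_attach (Finset.range w.length)
      (fun i => rinvW f (w.take i) * f (w.drop i))

lemma linv_nil (f : NCS k) : linv f [] = 1 := by rw [linv, linvW_eq]; simp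

lemma rinv_nil (f : NCS k) : rinv f [] = 1 := by rw [rinv, rinvW_eq]; simp

lemma mul_linv {f : NCS k} (hf : f [] = 1) : f * linv f = 1 := by
  funext w
  cases w with
  | nil => rw [NCS.mul_apply_nil, hf, linv_nil, one_mul]; rfl
  | cons c w' =>
    have h1 : linv f (c :: w')
        = - ∑ i ∈ Finset.range (c :: w').length,
            f ((c :: w').take (i + 1)) * linv f ((c :: w').drop (i + 1)) := by
      rw [linv, linvW_eq, if_neg (List.cons_ne_nil c w')]
    rw [NCS.mul_apply, Finset.sum_range_succ']
    simp only [List.take_zero, List.drop_zero, hf, one_mul]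
    rw [h1, NCS.one_apply, if_neg (List.cons_ne_nil c w')]
    exact add_neg_cancel _

lemma rinv_mul {f : NCS k} (hf : f [] = 1) : rinv f * f = 1 := by
  funext w
  cases w with
  | nil => rw [NCS.mul_apply_nil, hf, rinv_nil, one_mul]; rfl
  | cons c w' =>
    have h1 : rinv f (c :: w')
        = - ∑ i ∈ Finset.range (c :: w').length,
            rinv f ((c :: w').take i) * f ((c :: w').drop i) := by
      rw [rinv, rinvW_eq, if_neg (List.cons_ne_nil c w')]
    rw [NCS.mul_apply, Finset.sum_range_succ, List.take_length, List.drop_length, hf, mul_one,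
      h1, NCS.one_apply, if_neg (List.cons_ne_nil c w')]
    exact add_neg_cancel _

lemma rinv_eq_linv {f : NCS k} (hf : f [] = 1) : rinv f = linv f := by
  calc rinv f = rinv f * 1 := (mul_one _).symm
    _ = rinv f * (f * linv f) := by rw [mul_linv hf]
    _ = (rinv f * f) * linv f := (mul_assoc _ _ _).symm
    _ = 1 * linv f := by rw [rinv_mul hf]
    _ = linv f := one_mul _

lemma linv_mul {f : NCS k} (hf : f [] = 1) : linv f * f = 1 := by
  rw [← rinv_eq_linv hf]; exact rinv_mul hf

noncomputable def unitOf (f : NCS k) (hf : f [] = 1) : (NCS k)ˣ :=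
  ⟨f, linv f, mul_linv hf, linv_mul hf⟩

lemma isUnit_of_nil {f : NCS k} (hf : f [] = 1) : IsUnit f := ⟨unitOf f hf, rfl⟩

lemma ringInverse_eq_of (x y : NCS k) (h1 : x * y = 1) (h2 : y * x = 1) :
    Ring.inverse x = y := by
  rw [show x = ((⟨x, y, h1, h2⟩ : (NCS k)ˣ) : NCS k) from rfl, Ring.inverse_unit]
  rfl

lemma ringInverse_eq_linv {f : NCS k} (hf : f [] = 1) :
    Ring.inverse f = linv f :=
  ringInverse_eq_of f (linv f) (mul_linv hf) (linv_mul hf)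

lemma linv_nil_one {f : NCS k} (hf : f [] = 1) : linv f [] = 1 := linv_nil f

lemma substE_inv {a : Fin 2 → NCS k} (ha : CF a) {x y : NCS k}
    (h1 : x * y = 1) (h2 : y * x = 1) :
    substE a y = Ring.inverse (substE a x) := by
  refine (ringInverse_eq_of _ _ ?_ ?_).symm
  · rw [← substE_mul ha, h1, substE_one]
  · rw [← substE_mul ha, h2, substE_one]


open Finset

variable {k : Type} [CommRing k]

lemma shuffleW_nil_left (v : Word) : shuffleW [] v = {v} := by
  rw [shuffleW]

lemma shuffleW_cons_nil (a : Fin 2) (u : Word) : shuffleW (a :: u) [] = {a :: u} := by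
  rw [shuffleW]
  exact fun h => (List.cons_ne_nil a u h).elim

lemma shuffleW_nil_right (u : Word) : shuffleW u [] = {u} := by
  cases u with
  | nil => rw [shuffleW]
  | cons a u => rw [shuffleW_cons_nil]

lemma shuffleW_cons_cons (a b : Fin 2) (u v : Word) :
    shuffleW (a :: u) (b :: v)
      = ((shuffleW u (b :: v)).map (a :: ·)) + ((shuffleW (a :: u) v).map (b :: ·)) := by
  rw [shuffleW]

/-- view a coefficient function as an `NCS` element -/
def ofFun (F : Word → k) : NCS k := F

lemma ofFun_eq (F : Word → k) : ofFun F = F := rfl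

/-- dual coproduct pairing -/
def Dsum (f : Word → k) (u v : Word) : k := ((shuffleW u v).map f).sum

lemma Dsum_nil_left (f : Word → k) (v : Word) : Dsum f [] v = f v := by
  simp [Dsum, shuffleW_nil_left]

lemma Dsum_nil_right (f : Word → k) (u : Word) : Dsum f u [] = f u := by
  simp [Dsum, shuffleW_nil_right]

lemma Dsum_cons_cons (f : Word → k) (a b : Fin 2) (u v : Word) :
    Dsum f (a :: u) (b :: v)
      = Dsum (fun s => f (a :: s)) u (b :: v) + Dsum (fun s => f (b :: s)) (a :: u) v := by
  simp [Dsum, shuffleW_cons_cons, Multiset.map_map, Function.comp]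

lemma Dsum_cons_cons_ncs (f : NCS k) (a b : Fin 2) (u v : Word) :
    Dsum f (a :: u) (b :: v)
      = Dsum (fun s => f (a :: s)) u (b :: v) + Dsum (fun s => f (b :: s)) (a :: u) v :=
  Dsum_cons_cons f a b u v

lemma Dsum_nil_left_ncs (f : NCS k) (v : Word) : Dsum f [] v = f v := Dsum_nil_left f v

lemma Dsum_nil_right_ncs (f : NCS k) (u : Word) : Dsum f u [] = f u := Dsum_nil_right f u

lemma Dsum_add_fun (F G : Word → k) (u v : Word) :
    Dsum (fun s => F s + G s) u v = Dsum F u v + Dsum G u v := by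
  simp [Dsum, Multiset.sum_map_add]

lemma Dsum_mul_left (c : k) (F : Word → k) (u v : Word) :
    Dsum (fun s => c * F s) u v = c * Dsum F u v := by
  simp [Dsum, Multiset.sum_map_mul_left]

lemma Dsum_congr {F G : Word → k} (h : ∀ s ∈ shuffleW u v, F s = G s) :
    Dsum F u v = Dsum G u v := by
  unfold Dsum
  rw [Multiset.map_congr rfl h]

lemma Dsum_zero_fun (u v : Word) : Dsum (fun _ => (0 : k)) u v = 0 := by
  simp [Dsum]

lemma peel (n m : ℕ) (T : ℕ → ℕ → k) :
    ∑ i ∈ Finset.range (n+1+1), ∑ j ∈ Finset.range (m+1+1), T i j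
      = ((∑ i ∈ Finset.range (n+1), ∑ j ∈ Finset.range (m+1), T (i+1) (j+1))
        + (∑ i ∈ Finset.range (n+1), T (i+1) 0))
        + ((∑ j ∈ Finset.range (m+1), T 0 (j+1)) + T 0 0) := by
  rw [Finset.sum_range_succ' (fun i => ∑ j ∈ Finset.range (m+1+1), T i j) (n+1)]
  congr 1
  · rw [Finset.sum_congr rfl (fun i _ => Finset.sum_range_succ' (fun j => T (i+1) j) (m+1)),
      Finset.sum_add_distrib]
  · exact Finset.sum_range_succ' (fun j => T 0 j) (m+1)

lemma peel_inner (n m : ℕ) (T : ℕ → ℕ → k) :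
    ∑ i ∈ Finset.range (n+1), ∑ j ∈ Finset.range (m+1+1), T i j
      = (∑ i ∈ Finset.range (n+1), ∑ j ∈ Finset.range (m+1), T i (j+1))
        + ∑ i ∈ Finset.range (n+1), T i 0 := by
  rw [Finset.sum_congr rfl (fun i _ => Finset.sum_range_succ' (fun j => T i j) (m+1)),
    Finset.sum_add_distrib]

lemma peel_outer (n m : ℕ) (T : ℕ → ℕ → k) :
    ∑ i ∈ Finset.range (n+1+1), ∑ j ∈ Finset.range (m+1), T i j
      = (∑ i ∈ Finset.range (n+1), ∑ j ∈ Finset.range (m+1), T (i+1) j)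
        + ∑ j ∈ Finset.range (m+1), T 0 j :=
  Finset.sum_range_succ' (fun i => ∑ j ∈ Finset.range (m+1), T i j) (n+1)

/-- The key bialgebra compatibility. -/
lemma Dsum_mulW : ∀ (u v : Word) (f g : NCS k),
    Dsum (f * g) u v
      = ∑ i ∈ Finset.range (u.length + 1), ∑ j ∈ Finset.range (v.length + 1),
          Dsum f (u.take i) (v.take j) * Dsum g (u.drop i) (v.drop j) := by
  intro u
  induction u with
  | nil =>
    intro v f g
    rw [Dsum_nil_left (f * g), NCS.mul_apply,
      show (List.length ([] : Word) + 1) = 1 from rfl, Finset.sum_range_one]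
    exact Finset.sum_congr rfl fun j _ => by
      rw [List.take_nil, List.drop_nil, Dsum_nil_left f, Dsum_nil_left g]
  | cons a u' ihu =>
    intro v
    induction v with
    | nil =>
      intro f g
      rw [Dsum_nil_right (f * g), NCS.mul_apply]
      refine Finset.sum_congr rfl fun i _ => ?_
      rw [show (List.length ([] : Word) + 1) = 1 from rfl, Finset.sum_range_one,
        List.take_nil, List.drop_nil, Dsum_nil_right f, Dsum_nil_right g]
    | cons b v' ihv =>
      intro f g
      have hexp : ∀ (c : Fin 2) (fC : NCS k), (∀ w, fC w = f (c :: w)) →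
          ∀ s : Word, (f * g) (c :: s) = (fC * g) s + f [] * g (c :: s) := by
        intro c fC hC s
        rw [NCS.mul_apply, Finset.sum_range_succ', NCS.mul_apply]
        congr 1
        refine Finset.sum_congr rfl fun i _ => ?_
        rw [List.take_succ_cons, List.drop_succ_cons, hC]
      rw [Dsum_cons_cons (f * g)]
      have e1 : Dsum (fun s => (f * g) (a :: s)) u' (b :: v')
          = Dsum (ofFun (fun w => f (a :: w)) * g) u' (b :: v')
            + f [] * Dsum (fun s => g (a :: s)) u' (b :: v') := by
        rw [show (fun s => (f * g) (a :: s))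
            = (fun s => (ofFun (fun w => f (a :: w)) * g) s + f [] * g (a :: s)) from
          funext (hexp a _ fun w => rfl)]
        rw [Dsum_add_fun (ofFun (fun w => f (a :: w)) * g), Dsum_mul_left]
      have e2 : Dsum (fun s => (f * g) (b :: s)) (a :: u') v'
          = Dsum (ofFun (fun w => f (b :: w)) * g) (a :: u') v'
            + f [] * Dsum (fun s => g (b :: s)) (a :: u') v' := by
        rw [show (fun s => (f * g) (b :: s))
            = (fun s => (ofFun (fun w => f (b :: w)) * g) s + f [] * g (b :: s)) from
          funext (hexp b _ fun w => rfl)]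
        rw [Dsum_add_fun (ofFun (fun w => f (b :: w)) * g), Dsum_mul_left]
      rw [e1, e2, ihu (b :: v') (ofFun (fun w => f (a :: w))) g,
        ihv (ofFun (fun w => f (b :: w))) g]
      simp only [List.length_cons]
      simp only [peel]
      simp only [peel_inner]
      simp only [peel_outer]
      simp only [List.take_succ_cons, List.drop_succ_cons, List.take_zero, List.drop_zero]
      simp only [Dsum_cons_cons, Dsum_cons_cons_ncs]
      simp only [Dsum_nil_left, Dsum_nil_right, Dsum_nil_left_ncs, Dsum_nil_right_ncs]
      simp only [ofFun_eq]
      simp only [add_mul, mul_add, Finset.sum_add_distrib]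
      ring


open Finset

/-- generic (noncommutative-coefficient) convolution ring on words -/
def NCR (R : Type) [Ring R] : Type := Word → R

namespace NCR

variable {R : Type} [Ring R]

instance : AddCommGroup (NCR R) := Pi.addCommGroup

instance : Mul (NCR R) :=
  ⟨fun f g => fun w => ∑ i ∈ Finset.range (w.length + 1), f (w.take i) * g (w.drop i)⟩

instance : One (NCR R) := ⟨fun w => if w = [] then 1 else 0⟩

noncomputable instance : Ring (NCR R) :=
  { (inferInstance : AddCommGroup (NCR R)),
    (inferInstance : Mul (NCR R)), (inferInstance : One (NCR R)) with
    left_distrib := by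
      intro a b c; funext w
      show (∑ i ∈ Finset.range (w.length + 1), a (w.take i) * (b (w.drop i) + c (w.drop i)))
        = (∑ i ∈ Finset.range (w.length + 1), a (w.take i) * b (w.drop i))
          + (∑ i ∈ Finset.range (w.length + 1), a (w.take i) * c (w.drop i))
      simp [mul_add, Finset.sum_add_distrib]
    right_distrib := by
      intro a b c; funext w
      show (∑ i ∈ Finset.range (w.length + 1), (a (w.take i) + b (w.take i)) * c (w.drop i))
        = (∑ i ∈ Finset.range (w.length + 1), a (w.take i) * c (w.drop i))
          + (∑ i ∈ Finset.range (w.length + 1), b (w.take i) * c (w.drop i))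
      simp [add_mul, Finset.sum_add_distrib]
    zero_mul := by
      intro a; funext w
      show (∑ i ∈ Finset.range (w.length + 1), (0 : R) * a (w.drop i)) = 0
      simp
    mul_zero := by
      intro a; funext w
      show (∑ i ∈ Finset.range (w.length + 1), a (w.take i) * (0 : R)) = 0
      simp
    mul_assoc := by
      intro a b c; funext w
      show (∑ j ∈ Finset.range (w.length + 1),
        (∑ i ∈ Finset.range ((w.take j).length + 1),
          a ((w.take j).take i) * b ((w.take j).drop i)) * c (w.drop j))
        = ∑ i ∈ Finset.range (w.length + 1),
            a (w.take i) * (∑ j ∈ Finset.range ((w.drop i).length + 1),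
              b ((w.drop i).take j) * c ((w.drop i).drop j))
      set n := w.length with hn
      calc
        (∑ j ∈ Finset.range (n + 1),
          (∑ i ∈ Finset.range ((w.take j).length + 1),
            a ((w.take j).take i) * b ((w.take j).drop i)) * c (w.drop j))
            = ∑ j ∈ Finset.range (n + 1), ∑ i ∈ Finset.range (j + 1),
                a (w.take i) * (b ((w.drop i).take (j - i)) * c ((w.drop i).drop (j - i))) := by
              refine Finset.sum_congr rfl fun j hj => ?_
              rw [Finset.mem_range] at hj
              have hj' : j ≤ n := by omega
              have hlen : (w.take j).length = j := by
                rw [List.length_take]; omega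
              rw [Finset.sum_mul, hlen]
              refine Finset.sum_congr rfl fun i hi => ?_
              rw [Finset.mem_range] at hi
              have hi' : i ≤ j := by omega
              rw [List.take_take, min_eq_left hi', List.drop_take, List.drop_drop,
                Nat.add_sub_cancel' hi', mul_assoc]
        _ = ∑ i ∈ Finset.range (n + 1), ∑ j ∈ Finset.Ico i (n + 1),
                a (w.take i) * (b ((w.drop i).take (j - i)) * c ((w.drop i).drop (j - i))) := by
              simp only [Finset.range_eq_Ico]
              rw [Finset.sum_Ico_Ico_comm]
        _ = ∑ i ∈ Finset.range (n + 1),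
            a (w.take i) * (∑ j ∈ Finset.range ((w.drop i).length + 1),
              b ((w.drop i).take j) * c ((w.drop i).drop j)) := by
              refine Finset.sum_congr rfl fun i hi => ?_
              rw [Finset.mem_range] at hi
              have hi' : i ≤ n := by omega
              rw [Finset.sum_Ico_eq_sum_range, Finset.mul_sum]
              have h1 : n + 1 - i = (w.drop i).length + 1 := by
                rw [List.length_drop]; omega
              rw [h1]
              refine Finset.sum_congr rfl fun j _ => ?_
              rw [Nat.add_sub_cancel_left]
    one_mul := by
      intro a; funext w
      show (∑ i ∈ Finset.range (w.length + 1),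
        (if w.take i = [] then (1 : R) else 0) * a (w.drop i)) = a w
      rw [Finset.sum_eq_single 0]
      · simp
      · intro i hi hne
        rcases Nat.exists_eq_succ_of_ne_zero hne with ⟨j, rfl⟩
        rw [Finset.mem_range] at hi
        rw [if_neg, zero_mul]
        intro h
        rcases List.take_eq_nil_iff.mp h with h' | h'
        · omega
        · subst h'; simp at hi
      · simp
    mul_one := by
      intro a; funext w
      show (∑ i ∈ Finset.range (w.length + 1),
        a (w.take i) * (if w.drop i = [] then (1 : R) else 0)) = a w
      rw [Finset.sum_eq_single w.length]
      · simp
      · intro i hi hne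
        rw [Finset.mem_range] at hi
        rw [if_neg, mul_zero]
        intro h
        rw [List.drop_eq_nil_iff] at h
        omega
      · simp }


lemma mul_apply (f g : NCR R) (w : Word) :
    (f * g) w = ∑ i ∈ Finset.range (w.length + 1), f (w.take i) * g (w.drop i) := rfl

lemma one_apply (w : Word) : (1 : NCR R) w = if w = [] then 1 else 0 := rfl

lemma add_apply (f g : NCR R) (w : Word) : (f + g) w = f w + g w := rfl

end NCR


open Finset

variable {k : Type} [CommRing k]

/-- evaluation as additive hom -/
def evalHom (w : Word) : NCS k →+ k where
  toFun f := f w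
  map_zero' := rfl
  map_add' _ _ := rfl

lemma NCS.finset_sum_apply {α : Type} (s : Finset α) (F : α → NCS k) (w : Word) :
    (∑ x ∈ s, F x) w = ∑ x ∈ s, F x w :=
  map_sum (evalHom w) F s

/-- the dual coproduct as a map to the double convolution ring -/
def Phi (f : NCS k) : NCR (NCS k) := fun u => (fun v => Dsum f u v : NCS k)

lemma Phi_apply (f : NCS k) (u v : Word) : Phi f u v = Dsum f u v := rfl

lemma Phi_mul (f g : NCS k) : Phi (f * g) = Phi f * Phi g := by
  funext u v
  rw [Phi_apply, Dsum_mulW]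
  rw [show (Phi f * Phi g) u v
      = (∑ i ∈ Finset.range (u.length + 1), Phi f (u.take i) * Phi g (u.drop i)) v from rfl]
  rw [NCS.finset_sum_apply]
  exact Finset.sum_congr rfl fun i _ => by rw [NCS.mul_apply]; rfl

lemma shuffle_ne_nil_right : ∀ (u : Word) (b : Fin 2) (v : Word) (s : Word),
    s ∈ shuffleW u (b :: v) → s ≠ [] := by
  intro u b v s hs
  cases u with
  | nil => rw [shuffleW_nil_left] at hs; simp at hs; simp [hs]
  | cons a u' =>
    rw [shuffleW_cons_cons] at hs
    rcases Multiset.mem_add.1 hs with h | h <;>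
      · rcases Multiset.mem_map.1 h with ⟨t, _, rfl⟩; simp

lemma shuffle_ne_nil_left : ∀ (a : Fin 2) (u : Word) (v : Word) (s : Word),
    s ∈ shuffleW (a :: u) v → s ≠ [] := by
  intro a u v s hs
  cases v with
  | nil => rw [shuffleW_nil_right] at hs; simp at hs; simp [hs]
  | cons b v' =>
    rw [shuffleW_cons_cons] at hs
    rcases Multiset.mem_add.1 hs with h | h <;>
      · rcases Multiset.mem_map.1 h with ⟨t, _, rfl⟩; simp

lemma Phi_one : Phi (1 : NCS k) = 1 := by
  funext u v
  rw [Phi_apply, show (1 : NCR (NCS k)) u v = if u = [] then (1 : NCS k) v else 0 from by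
    rw [NCR.one_apply]; split <;> rfl]
  cases u with
  | nil => rw [Dsum_nil_left (1 : NCS k), if_pos rfl]
  | cons a u' =>
    rw [if_neg (List.cons_ne_nil a u')]
    cases v with
    | nil => rw [Dsum_nil_right (1 : NCS k), NCS.one_apply, if_neg (List.cons_ne_nil a u')]
    | cons b v' =>
      refine Multiset.sum_eq_zero fun x hx => ?_
      rcases Multiset.mem_map.1 hx with ⟨s, hs, rfl⟩
      rw [NCS.one_apply, if_neg (shuffle_ne_nil_left a u' (b :: v') s hs)]

/-- tensor of two series in the double ring -/
noncomputable def tau (x y : NCS k) : NCR (NCS k) := fun u => x u • y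

lemma tau_apply (x y : NCS k) (u v : Word) : tau x y u v = x u * y v := rfl

lemma tau_mul (x y x' y' : NCS k) : tau x y * tau x' y' = tau (x * x') (y * y') := by
  funext u
  rw [show (tau x y * tau x' y') u
      = ∑ i ∈ Finset.range (u.length + 1), (x (u.take i) • y) * (x' (u.drop i) • y') from rfl]
  have : ∀ i, (x (u.take i) • y) * (x' (u.drop i) • y')
      = (x (u.take i) * x' (u.drop i)) • (y * y') := by
    intro i
    rw [smul_mul_assoc, mul_smul_comm, smul_smul]
  rw [Finset.sum_congr rfl fun i _ => this i, ← Finset.sum_smul]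
  rw [show tau (x * x') (y * y') u = (x * x') u • (y * y') from rfl, NCS.mul_apply]

lemma tau_one : tau (1 : NCS k) 1 = 1 := by
  funext u
  rw [show tau (1 : NCS k) 1 u = (1 : NCS k) u • (1 : NCS k) from rfl, NCS.one_apply]
  rw [show (1 : NCR (NCS k)) u = if u = [] then (1 : NCS k) else 0 from rfl]
  split <;> simp

lemma isGrouplike_iff {g : NCS k} :
    IsGrouplike g ↔ g [] = 1 ∧ Phi g = tau g g := by
  constructor
  · rintro ⟨h1, h2⟩
    exact ⟨h1, funext fun u => funext fun v => h2 u v⟩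
  · rintro ⟨h1, h2⟩
    exact ⟨h1, fun u v => congrFun (congrFun h2 u) v⟩

lemma IsGrouplike.mul {f g : NCS k} (hf : IsGrouplike f) (hg : IsGrouplike g) :
    IsGrouplike (f * g) := by
  rw [isGrouplike_iff] at hf hg ⊢
  refine ⟨by rw [NCS.mul_apply_nil, hf.1, hg.1, one_mul], ?_⟩
  rw [Phi_mul, hf.2, hg.2, tau_mul]

lemma IsGrouplike.one : IsGrouplike (1 : NCS k) := by
  rw [isGrouplike_iff]
  exact ⟨by rw [NCS.one_apply, if_pos rfl], by rw [Phi_one, tau_one]⟩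

lemma IsGrouplike.linv_grouplike {g : NCS k} (hg : IsGrouplike g) : IsGrouplike (_root_.linv g) := by
  rw [isGrouplike_iff] at hg ⊢
  obtain ⟨h1, h2⟩ := hg
  have hgl : g * linv g = 1 := mul_linv h1
  have hlg : linv g * g = 1 := linv_mul h1
  refine ⟨linv_nil g, ?_⟩
  refine left_inv_eq_right_inv (a := Phi g) ?_ ?_
  · rw [← Phi_mul, hlg, Phi_one]
  · rw [h2, tau_mul, hgl, tau_one]

/-- primitive elements -/
noncomputable def IsPrim (p : NCS k) : Prop := Phi p = tau p 1 + tau 1 p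

lemma isPrim_iff {p : NCS k} :
    IsPrim p ↔ ∀ u v, Dsum p u v = p u * (1 : NCS k) v + (1 : NCS k) u * p v := by
  constructor
  · intro h u v
    have := congrFun (congrFun h u) v
    exact this
  · intro h
    funext u v
    exact h u v

lemma prim_e (i : Fin 2) : IsPrim (NCS.e i : NCS k) := by
  rw [isPrim_iff]
  intro u v
  cases u with
  | nil =>
    rw [Dsum_nil_left (NCS.e i : NCS k), show (NCS.e i : NCS k) [] = 0 from by simp [NCS.e]]
    simp [NCS.one_apply]
  | cons a u' =>
    cases v with
    | nil =>
      rw [Dsum_nil_right (NCS.e i : NCS k), show (NCS.e i : NCS k) [] = 0 from by simp [NCS.e]]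
      simp [NCS.one_apply]
    | cons b v' =>
      rw [Dsum_cons_cons (NCS.e i : NCS k)]
      have z1 : Dsum (fun s => (NCS.e i : NCS k) (a :: s)) u' (b :: v') = 0 := by
        refine Multiset.sum_eq_zero fun x hx => ?_
        rcases Multiset.mem_map.1 hx with ⟨s, hs, rfl⟩
        have := shuffle_ne_nil_right u' b v' s hs
        simp [NCS.e, this]
      have z2 : Dsum (fun s => (NCS.e i : NCS k) (b :: s)) (a :: u') v' = 0 := by
        refine Multiset.sum_eq_zero fun x hx => ?_
        rcases Multiset.mem_map.1 hx with ⟨s, hs, rfl⟩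
        have := shuffle_ne_nil_left a u' v' s hs
        simp [NCS.e, this]
      rw [z1, z2, NCS.one_apply, NCS.one_apply,
        if_neg (List.cons_ne_nil a u'), if_neg (List.cons_ne_nil b v')]
      ring

lemma prim_smul {p : NCS k} (c : k) (hp : IsPrim p) : IsPrim (c • p) := by
  rw [isPrim_iff] at hp ⊢
  intro u v
  have : Dsum (c • p) u v = c * Dsum p u v := Dsum_mul_left c p u v
  rw [this, hp u v, NCS.smul_apply, NCS.smul_apply]
  ring

lemma prim_conj {g p : NCS k} (hg : IsGrouplike g) (hp : IsPrim p) :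
    IsPrim (g * p * linv g) := by
  have h1 : g [] = 1 := hg.1
  have hgl : g * linv g = 1 := mul_linv h1
  have hPg : Phi g = tau g g := (isGrouplike_iff.1 hg).2
  have hPl : Phi (linv g) = tau (linv g) (linv g) :=
    (isGrouplike_iff.1 (IsGrouplike.linv_grouplike hg)).2
  unfold IsPrim at hp ⊢
  rw [Phi_mul, Phi_mul, hp, hPg, hPl, mul_add, add_mul, tau_mul, tau_mul, tau_mul, tau_mul]
  rw [mul_one, hgl]


open Finset

variable {k : Type} [CommRing k]

lemma shuffle_length : ∀ (u v s : Word), s ∈ shuffleW u v → s.length = u.length + v.length := by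
  intro u
  induction u with
  | nil =>
    intro v s hs
    rw [shuffleW_nil_left, Multiset.mem_singleton] at hs
    simp [hs]
  | cons a u' ihu =>
    intro v
    induction v with
    | nil =>
      intro s hs
      rw [shuffleW_cons_nil, Multiset.mem_singleton] at hs
      simp [hs]
    | cons b v' ihv =>
      intro s hs
      rw [shuffleW_cons_cons] at hs
      rcases Multiset.mem_add.1 hs with h | h
      · rcases Multiset.mem_map.1 h with ⟨t, ht, rfl⟩
        have := ihu (b :: v') t ht
        simp [this]; omega
      · rcases Multiset.mem_map.1 h with ⟨t, ht, rfl⟩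
        have := ihv t ht
        simp [this]; omega

/-- all unshuffles (deconcatenations into subsequences) of a word -/
def ush : Word → Multiset (Word × Word)
  | [] => {([], [])}
  | i :: l => ((ush l).map fun p => (i :: p.1, p.2)) + ((ush l).map fun p => (p.1, i :: p.2))

lemma ush_nil : ush ([] : Word) = {([], [])} := rfl

lemma ush_cons (i : Fin 2) (l : Word) :
    ush (i :: l) = ((ush l).map fun p => (i :: p.1, p.2))
      + ((ush l).map fun p => (p.1, i :: p.2)) := rfl

lemma ush_length : ∀ (l : Word) (p : Word × Word), p ∈ ush l →
    p.1.length + p.2.length = l.length := by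
  intro l
  induction l with
  | nil =>
    intro p hp
    rw [ush_nil, Multiset.mem_singleton] at hp
    simp [hp]
  | cons i l ih =>
    intro p hp
    rw [ush_cons] at hp
    rcases Multiset.mem_add.1 hp with h | h <;>
      · rcases Multiset.mem_map.1 h with ⟨q, hq, rfl⟩
        have := ih q hq
        simp; omega

-- count helper lemmas
lemma count_cons_map_nil (i : Fin 2) (m : Multiset Word) :
    ((m.map (i :: ·)).count []) = 0 := by
  rw [Multiset.count_eq_zero]
  intro h
  rcases Multiset.mem_map.1 h with ⟨t, _, ht⟩
  exact List.cons_ne_nil i t ht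

lemma count_cons_map_cons (i j : Fin 2) (m : Multiset Word) (w : Word) :
    ((m.map (i :: ·)).count (j :: w)) = if j = i then m.count w else 0 := by
  split_ifs with h
  · subst h
    exact Multiset.count_map_eq_count' _ m (fun x y hxy => by simpa using hxy) w
  · rw [Multiset.count_eq_zero]
    intro hmem
    rcases Multiset.mem_map.1 hmem with ⟨t, _, ht⟩
    exact h (by injection ht with h1 h2; exact h1.symm ▸ rfl)

lemma count_consL_nil (i : Fin 2) (m : Multiset (Word × Word)) (y : Word) :
    ((m.map fun p => (i :: p.1, p.2)).count ([], y)) = 0 := by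
  rw [Multiset.count_eq_zero]
  intro h
  rcases Multiset.mem_map.1 h with ⟨q, _, hq⟩
  exact List.cons_ne_nil i q.1 (congrArg Prod.fst hq)

lemma count_consL_cons (i j : Fin 2) (m : Multiset (Word × Word)) (x y : Word) :
    ((m.map fun p => (i :: p.1, p.2)).count (j :: x, y))
      = if j = i then m.count (x, y) else 0 := by
  split_ifs with h
  · subst h
    exact Multiset.count_map_eq_count' _ m
      (fun p q hpq => by
        obtain ⟨h1, h2⟩ := Prod.mk.injEq _ _ _ _ ▸ hpq
        exact Prod.ext (by injection h1) h2) (x, y)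
  · rw [Multiset.count_eq_zero]
    intro hmem
    rcases Multiset.mem_map.1 hmem with ⟨q, _, hq⟩
    have := congrArg Prod.fst hq
    exact h (by injection this with h1 h2; exact h1.symm ▸ rfl)

lemma count_consR_nil (i : Fin 2) (m : Multiset (Word × Word)) (x : Word) :
    ((m.map fun p => (p.1, i :: p.2)).count (x, [])) = 0 := by
  rw [Multiset.count_eq_zero]
  intro h
  rcases Multiset.mem_map.1 h with ⟨q, _, hq⟩
  exact List.cons_ne_nil i q.2 (congrArg Prod.snd hq)

lemma count_consR_cons (i j : Fin 2) (m : Multiset (Word × Word)) (x y : Word) :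
    ((m.map fun p => (p.1, i :: p.2)).count (x, j :: y))
      = if j = i then m.count (x, y) else 0 := by
  split_ifs with h
  · subst h
    exact Multiset.count_map_eq_count' _ m
      (fun p q hpq => by
        obtain ⟨h1, h2⟩ := Prod.mk.injEq _ _ _ _ ▸ hpq
        exact Prod.ext h1 (by injection h2)) (x, y)
  · rw [Multiset.count_eq_zero]
    intro hmem
    rcases Multiset.mem_map.1 hmem with ⟨q, _, hq⟩
    have := congrArg Prod.snd hq
    exact h (by injection this with h1 h2; exact h1.symm ▸ rfl)

lemma count_nil_shuffle : ∀ (x y : Word),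
    (shuffleW x y).count [] = if x = [] ∧ y = [] then 1 else 0 := by
  intro x y
  cases x with
  | nil =>
    cases y with
    | nil => rw [shuffleW_nil_left]; simp
    | cons b y' => rw [shuffleW_nil_left]; simp
  | cons a x' =>
    cases y with
    | nil => rw [shuffleW_cons_nil]; simp
    | cons b y' =>
      rw [if_neg (by simp)]
      rw [Multiset.count_eq_zero]
      intro h
      exact shuffle_ne_nil_left a x' (b :: y') [] h rfl

lemma count_ush_eq : ∀ (l : Word) (x y : Word),
    (ush l).count (x, y) = (shuffleW x y).count l := by
  intro l
  induction l with
  | nil =>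
    intro x y
    rw [ush_nil, count_nil_shuffle]
    by_cases hx : x = [] <;> by_cases hy : y = [] <;>
      simp [Multiset.count_singleton, Prod.ext_iff, hx, hy]
  | cons i l ih =>
    intro x y
    rw [ush_cons, Multiset.count_add]
    cases x with
    | nil =>
      cases y with
      | nil =>
        rw [count_consL_nil, count_consR_nil, shuffleW_nil_left]
        simp [Multiset.count_singleton]
      | cons b y' =>
        rw [count_consL_nil, count_consR_cons, shuffleW_nil_left]
        by_cases hb : b = i
        · subst hb
          rw [if_pos rfl, ih, shuffleW_nil_left]
          simp [Multiset.count_singleton, List.cons_eq_cons]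
        · rw [if_neg hb]
          simp [Multiset.count_singleton, List.cons_eq_cons, Ne.symm hb, hb]
    | cons a x' =>
      cases y with
      | nil =>
        rw [count_consR_nil, count_consL_cons, shuffleW_cons_nil]
        by_cases ha : a = i
        · subst ha
          rw [if_pos rfl, ih, shuffleW_nil_right]
          simp [Multiset.count_singleton, List.cons_eq_cons]
        · rw [if_neg ha]
          simp [Multiset.count_singleton, List.cons_eq_cons, Ne.symm ha, ha]
      | cons b y' =>
        rw [count_consL_cons, count_consR_cons, shuffleW_cons_cons, Multiset.count_add]
        congr 1
        · by_cases ha : a = i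
          · subst ha
            rw [if_pos rfl, ih, count_cons_map_cons, if_pos rfl]
          · rw [if_neg ha, count_cons_map_cons, if_neg (fun h => ha h.symm)]
        · by_cases hb : b = i
          · subst hb
            rw [if_pos rfl, ih, count_cons_map_cons, if_pos rfl]
          · rw [if_neg hb, count_cons_map_cons, if_neg (fun h => hb h.symm)]


open Finset

variable {k : Type} [CommRing k]

lemma msum_map_sum {α β : Type} (m : Multiset α) (T : Finset β) (F : β → α → k) :
    ((m.map (fun s => ∑ l ∈ T, F l s)).sum) = ∑ l ∈ T, ((m.map (F l)).sum) := by
  induction m using Multiset.induction with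
  | empty => simp
  | cons a m ih => simp [ih, Finset.sum_add_distrib]

lemma msum_eq_sum_count {α : Type} [DecidableEq α] (m : Multiset α) (T : Finset α)
    (hm : ∀ x ∈ m, x ∈ T) (F : α → k) :
    (m.map F).sum = ∑ x ∈ T, (m.count x : k) * F x := by
  rw [Finset.sum_multiset_map_count]
  rw [Finset.sum_subset (fun x hx => hm x (Multiset.mem_toFinset.1 hx))]
  · exact Finset.sum_congr rfl fun x _ => by rw [nsmul_eq_mul]
  · intro x _ hx
    rw [Multiset.count_eq_zero_of_notMem (fun hc => hx (Multiset.mem_toFinset.2 hc))]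
    simp

lemma ncr_msum_apply (m : Multiset (NCR (NCS k))) (u v : Word) :
    (m.sum) u v = ((m.map (fun F => F u v)).sum) := by
  induction m using Multiset.induction with
  | empty => rfl
  | cons F m ih =>
    rw [Multiset.sum_cons, Multiset.map_cons, Multiset.sum_cons, ← ih]
    rfl

lemma Phi_pr {a : Fin 2 → NCS k} (hp : ∀ i, IsPrim (a i)) (l : Word) :
    Phi (pr a l) = ((ush l).map (fun p => tau (pr a p.1) (pr a p.2))).sum := by
  induction l with
  | nil =>
    rw [pr_nil, Phi_one, ush_nil]
    simp [pr_nil, tau_one]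
  | cons i l ih =>
    rw [pr_cons, Phi_mul, ih, hp i, ush_cons, Multiset.map_add, Multiset.sum_add,
      Multiset.map_map, Multiset.map_map]
    rw [← Multiset.sum_map_mul_left]
    rw [show (fun s => (tau (a i) 1 + tau 1 (a i)) * (fun p => tau (pr a p.1) (pr a p.2)) s)
        = (fun p : Word × Word => tau (pr a (i :: p.1)) (pr a p.2)
            + tau (pr a p.1) (pr a (i :: p.2))) from ?_]
    · rw [Multiset.sum_map_add]
      rfl
    · funext p
      rw [add_mul, tau_mul, tau_mul, one_mul, one_mul, ← pr_cons, ← pr_cons]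

lemma Dsum_substE {a : Fin 2 → NCS k} (ha : CF a) (hp : ∀ i, IsPrim (a i))
    (f : NCS k) (u v : Word) :
    Dsum (substE a f) u v
      = ∑ p ∈ (WLe (u.length + v.length)) ×ˢ (WLe (u.length + v.length)),
          Dsum f p.1 p.2 * (pr a p.1 u * pr a p.2 v) := by
  set N := u.length + v.length with hN
  have step1 : Dsum (substE a f) u v
      = ∑ l ∈ WLe N, f l * Dsum (pr a l) u v := by
    unfold Dsum
    rw [Multiset.map_congr rfl
      (fun s hs => substE_apply_le ha f (le_of_eq (shuffle_length u v s hs)))]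
    rw [msum_map_sum]
    exact Finset.sum_congr rfl fun l _ => by
      rw [show (fun s => f l * pr a l s) = (fun s => f l * (pr a l) s) from rfl,
        Multiset.sum_map_mul_left (f := pr a l)]
  have step2 : ∀ l : Word, Dsum (pr a l) u v
      = ((ush l).map (fun p => pr a p.1 u * pr a p.2 v)).sum := by
    intro l
    have := congrFun (congrFun (Phi_pr hp l) u) v
    rw [Phi_apply] at this
    rw [this, ncr_msum_apply, Multiset.map_map]
    rfl
  have step3 : ∀ l ∈ WLe N, f l * Dsum (pr a l) u v
      = ∑ p ∈ (WLe N) ×ˢ (WLe N),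
          ((shuffleW p.1 p.2).count l : k) * f l * (pr a p.1 u * pr a p.2 v) := by
    intro l hl
    rw [step2 l, msum_eq_sum_count (ush l) ((WLe N) ×ˢ (WLe N))
      (fun p hpm => Finset.mem_product.2 ⟨mem_WLe.2 ?_, mem_WLe.2 ?_⟩), Finset.mul_sum]
    · refine Finset.sum_congr rfl fun p _ => ?_
      rw [count_ush_eq]
      ring
    · have := ush_length l p hpm
      have := mem_WLe.1 hl
      omega
    · have := ush_length l p hpm
      have := mem_WLe.1 hl
      omega
  rw [step1, Finset.sum_congr rfl step3, Finset.sum_comm]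
  refine Finset.sum_congr rfl fun p hp' => ?_
  by_cases hpl : p.1.length + p.2.length ≤ N
  · have hsub : ∀ s ∈ shuffleW p.1 p.2, s ∈ WLe N := fun s hs =>
      mem_WLe.2 (by rw [shuffle_length p.1 p.2 s hs]; omega)
    have hD : Dsum f p.1 p.2 = ∑ l ∈ WLe N, ((shuffleW p.1 p.2).count l : k) * f l :=
      msum_eq_sum_count _ _ hsub f
    rw [hD, Finset.sum_mul]
  · have hzero : pr a p.1 u * pr a p.2 v = 0 := by
      by_cases h1 : p.1.length ≤ u.length
      · rw [pr_eq_zero ha p.2 v (by omega), mul_zero]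
      · rw [pr_eq_zero ha p.1 u (by omega), zero_mul]
    rw [hzero, mul_zero]
    exact Finset.sum_eq_zero fun l _ => mul_zero _

lemma substE_grouplike {a : Fin 2 → NCS k} (ha : CF a) (hp : ∀ i, IsPrim (a i))
    {f : NCS k} (hf : IsGrouplike f) : IsGrouplike (substE a f) := by
  constructor
  · rw [substE_apply_nil, hf.1]
  · intro u v
    have key := Dsum_substE ha hp f u v
    rw [show ((shuffleW u v).map (substE a f)).sum = Dsum (substE a f) u v from rfl, key]
    set N := u.length + v.length with hN
    rw [substE_apply_le (n := N) ha f (by omega), substE_apply_le (n := N) ha f (by omega),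
      Finset.sum_mul_sum, ← Finset.sum_product']
    refine Finset.sum_congr rfl fun p _ => ?_
    rw [show Dsum f p.1 p.2 = f p.1 * f p.2 from hf.2 p.1 p.2]
    ring


open Finset

variable {k : Type} [CommRing k]

section Triangular

variable {a : Fin 2 → NCS k} {μ ν : k}

lemma pr_top (ha : CF a) (htop : ∀ i j : Fin 2, a i [j] = if j = i then μ else 0) :
    ∀ (l w : Word), l.length = w.length →
      pr a l w = if l = w then μ ^ w.length else 0 := by
  intro l
  induction l with
  | nil =>
    intro w hw
    have : w = [] := List.length_eq_zero_iff.1 (by simpa using hw.symm)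
    subst this
    simp [pr_nil, NCS.one_apply]
  | cons i l' ih =>
    intro w hw
    cases w with
    | nil => simp at hw
    | cons c w' =>
      have hlen : l'.length = w'.length := by simpa using hw
      rw [pr_cons, NCS.mul_apply]
      rw [Finset.sum_eq_single_of_mem 1
        (Finset.mem_range.2 (by simp only [List.length_cons]; omega))]
      · rw [List.take_succ_cons, List.take_zero, List.drop_succ_cons, List.drop_zero,
          htop i c, ih w' hlen]
        have hiff : ((i :: l' : Word) = c :: w') = (c = i ∧ l' = w') := by
          apply propext
          constructor
          · intro h
            injection h with ha hb
            exact ⟨ha.symm, hb⟩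
          · rintro ⟨rfl, rfl⟩
            rfl
        simp only [hiff]
        by_cases h1 : c = i <;> by_cases h2 : l' = w' <;>
          simp [h1, h2, List.length_cons, pow_succ] <;> ring
      · intro j hj hj1
        rcases Nat.eq_zero_or_pos j with rfl | hj0
        · rw [List.take_zero, ha i, zero_mul]
        · have hj2 : 2 ≤ j := by omega
          have hjle : j ≤ w'.length + 1 := by
            have := Finset.mem_range.1 hj
            simpa using Nat.lt_succ_iff.1 this
          rw [pr_eq_zero ha l' ((c :: w').drop j)
            (by rw [List.length_drop]; simp only [List.length_cons]; omega), mul_zero]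

lemma substE_split (ha : CF a) (htop : ∀ i j : Fin 2, a i [j] = if j = i then μ else 0)
    (s : NCS k) (w : Word) :
    substE a s w
      = (∑ l ∈ (WLe w.length).filter (fun l => l.length < w.length), s l * pr a l w)
        + s w * μ ^ w.length := by
  rw [substE_apply', ← Finset.sum_filter_add_sum_filter_not (WLe w.length)
    (fun l => l.length < w.length)]
  congr 1
  rw [Finset.sum_eq_single_of_mem w]
  · rw [pr_top ha htop w w rfl, if_pos rfl]
  · exact Finset.mem_filter.2 ⟨mem_WLe.2 le_rfl, by simp⟩
  · intro l hl hlw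
    obtain ⟨hlm, hlnot⟩ := Finset.mem_filter.1 hl
    have h1 : l.length = w.length := by
      have := mem_WLe.1 hlm
      omega
    rw [pr_top ha htop l w h1, if_neg hlw, mul_zero]

lemma substE_inj_top (ha : CF a) (htop : ∀ i j : Fin 2, a i [j] = if j = i then μ else 0)
    (hμν : μ * ν = 1) {s t : NCS k} (hst : substE a s = substE a t) : s = t := by
  have key : ∀ (n : ℕ) (w : Word), w.length = n → s w = t w := by
    intro n
    induction n using Nat.strong_induction_on with
    | _ n ih =>
      intro w hw
      have h1 := congrFun hst w
      rw [substE_split ha htop s w, substE_split ha htop t w] at h1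
      have h2 : ∑ l ∈ (WLe w.length).filter (fun l => l.length < w.length), s l * pr a l w
          = ∑ l ∈ (WLe w.length).filter (fun l => l.length < w.length), t l * pr a l w := by
        refine Finset.sum_congr rfl fun l hl => ?_
        obtain ⟨_, hllt⟩ := Finset.mem_filter.1 hl
        rw [ih l.length (by omega) l rfl]
      rw [h2, add_left_cancel_iff] at h1
      have hpow : μ ^ w.length * ν ^ w.length = 1 := by
        rw [← mul_pow, hμν, one_pow]
      calc s w = s w * (μ ^ w.length * ν ^ w.length) := by rw [hpow, mul_one]
        _ = (s w * μ ^ w.length) * ν ^ w.length := by ring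
        _ = (t w * μ ^ w.length) * ν ^ w.length := by rw [h1]
        _ = t w * (μ ^ w.length * ν ^ w.length) := by ring
        _ = t w := by rw [hpow, mul_one]
  funext w
  exact key w.length w rfl

end Triangular

noncomputable def solW (a : Fin 2 → NCS k) (ν : k) (t : NCS k) : Word → k
  | w =>
    ν ^ w.length * (t w
      - ∑ l ∈ ((WLe w.length).filter (fun l => l.length < w.length)).attach,
          solW a ν t l.1 * pr a l.1 w)
termination_by w => w.length
decreasing_by
  exact (Finset.mem_filter.1 l.2).2

noncomputable def sol (a : Fin 2 → NCS k) (ν : k) (t : NCS k) : NCS k := solW a ν t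

lemma solW_eq (a : Fin 2 → NCS k) (ν : k) (t : NCS k) (w : Word) :
    solW a ν t w
      = ν ^ w.length * (t w
          - ∑ l ∈ (WLe w.length).filter (fun l => l.length < w.length),
              solW a ν t l * pr a l w) := by
  rw [solW.eq_def]
  dsimp only
  rw [Finset.sum_attach ((WLe w.length).filter fun l => l.length < w.length)
    (fun l => solW a ν t l * pr a l w)]

section Sol

variable {a : Fin 2 → NCS k} {μ ν : k}

lemma substE_sol (ha : CF a) (htop : ∀ i j : Fin 2, a i [j] = if j = i then μ else 0)
    (hμν : μ * ν = 1) (t : NCS k) : substE a (sol a ν t) = t := by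
  funext w
  rw [substE_split ha htop (sol a ν t) w]
  have hsol : sol a ν t w
      = ν ^ w.length * (t w
          - ∑ l ∈ (WLe w.length).filter (fun l => l.length < w.length),
              sol a ν t l * pr a l w) := solW_eq a ν t w
  set S := ∑ l ∈ (WLe w.length).filter (fun l => l.length < w.length),
      sol a ν t l * pr a l w with hS
  rw [hsol]
  have hpow : ν ^ w.length * μ ^ w.length = 1 := by
    rw [← mul_pow, mul_comm ν μ, hμν, one_pow]
  calc S + ν ^ w.length * (t w - S) * μ ^ w.length
      = S + (ν ^ w.length * μ ^ w.length) * (t w - S) := by ring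
    _ = t w := by rw [hpow]; ring

lemma dsq_unique (ha : CF a) (htop : ∀ i j : Fin 2, a i [j] = if j = i then μ else 0)
    (hμν : μ * ν = 1) (F G : Word → Word → k)
    (hFG : ∀ u v : Word,
      (∑ p ∈ (WLe (u.length + v.length)) ×ˢ (WLe (u.length + v.length)),
          F p.1 p.2 * (pr a p.1 u * pr a p.2 v))
        = ∑ p ∈ (WLe (u.length + v.length)) ×ˢ (WLe (u.length + v.length)),
            G p.1 p.2 * (pr a p.1 u * pr a p.2 v)) :
    ∀ u v : Word, F u v = G u v := by
  have key : ∀ (n : ℕ) (u v : Word), u.length + v.length = n → F u v = G u v := by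
    intro n
    induction n using Nat.strong_induction_on with
    | _ n ih =>
      intro u v hn
      set N := u.length + v.length with hN
      have h1 := hFG u v
      have hsplit : ∀ H : Word → Word → k,
          (∑ p ∈ (WLe N) ×ˢ (WLe N), H p.1 p.2 * (pr a p.1 u * pr a p.2 v))
            = (∑ p ∈ ((WLe N) ×ˢ (WLe N)).filter
                  (fun p => p.1.length + p.2.length < N),
                H p.1 p.2 * (pr a p.1 u * pr a p.2 v))
              + H u v * (μ ^ u.length * μ ^ v.length) := by
        intro H
        rw [← Finset.sum_filter_add_sum_filter_not ((WLe N) ×ˢ (WLe N))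
          (fun p => p.1.length + p.2.length < N)]
        congr 1
        rw [Finset.sum_eq_single_of_mem (u, v)]
        · rw [pr_top ha htop u u rfl, pr_top ha htop v v rfl, if_pos rfl, if_pos rfl]
        · refine Finset.mem_filter.2 ⟨Finset.mem_product.2
            ⟨mem_WLe.2 (show u.length ≤ N by omega), mem_WLe.2 (show v.length ≤ N by omega)⟩,
            show ¬(u.length + v.length < N) by omega⟩
        · intro p hp hpne
          obtain ⟨hpm, hpge⟩ := Finset.mem_filter.1 hp
          obtain ⟨hp1, hp2⟩ := Finset.mem_product.1 hpm
          have hb1 : p.1.length ≤ N := mem_WLe.1 hp1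
          have hb2 : p.2.length ≤ N := mem_WLe.1 hp2
          simp only [not_lt] at hpge
          rcases lt_trichotomy p.1.length u.length with h | h | h
          · rw [pr_eq_zero ha p.2 v (by omega), mul_zero, mul_zero]
          · rcases lt_or_ge v.length p.2.length with h' | h'
            · rw [pr_eq_zero ha p.2 v h', mul_zero, mul_zero]
            · have h'' : p.2.length = v.length := by omega
              rw [pr_top ha htop p.1 u h, pr_top ha htop p.2 v h'']
              by_cases e1 : p.1 = u
              · have e2 : p.2 ≠ v := fun e2 => hpne (Prod.ext e1 e2)
                rw [if_neg e2, mul_zero, mul_zero]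
              · rw [if_neg e1, zero_mul, mul_zero]
          · rw [pr_eq_zero ha p.1 u h, zero_mul, mul_zero]
      rw [hsplit F, hsplit G] at h1
      have h2 : (∑ p ∈ ((WLe N) ×ˢ (WLe N)).filter
            (fun p => p.1.length + p.2.length < N),
          F p.1 p.2 * (pr a p.1 u * pr a p.2 v))
          = ∑ p ∈ ((WLe N) ×ˢ (WLe N)).filter
              (fun p => p.1.length + p.2.length < N),
            G p.1 p.2 * (pr a p.1 u * pr a p.2 v) := by
        refine Finset.sum_congr rfl fun p hp => ?_
        obtain ⟨_, hplt⟩ := Finset.mem_filter.1 hp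
        rw [ih (p.1.length + p.2.length) (by omega) p.1 p.2 rfl]
      rw [h2, add_left_cancel_iff] at h1
      have hpow : (μ ^ u.length * μ ^ v.length) * (ν ^ u.length * ν ^ v.length) = 1 := by
        rw [show (μ ^ u.length * μ ^ v.length) * (ν ^ u.length * ν ^ v.length)
            = (μ * ν) ^ u.length * (μ * ν) ^ v.length from by rw [mul_pow, mul_pow]; ring,
          hμν, one_pow, one_pow, mul_one]
      calc F u v = F u v * ((μ ^ u.length * μ ^ v.length) * (ν ^ u.length * ν ^ v.length)) := by
            rw [hpow, mul_one]
        _ = (F u v * (μ ^ u.length * μ ^ v.length)) * (ν ^ u.length * ν ^ v.length) := by ring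
        _ = (G u v * (μ ^ u.length * μ ^ v.length)) * (ν ^ u.length * ν ^ v.length) := by rw [h1]
        _ = G u v * ((μ ^ u.length * μ ^ v.length) * (ν ^ u.length * ν ^ v.length)) := by ring
        _ = G u v := by rw [hpow, mul_one]
  intro u v
  exact key (u.length + v.length) u v rfl

end Sol


open Finset

variable {k : Type} [CommRing k]

noncomputable def Agen (μ : k) (g : NCS k) : Fin 2 → NCS k :=
  fun i => if i = 0 then g * (μ • NCS.e 0) * Ring.inverse g else μ • NCS.e 1

lemma aut1_eq (μ : k) (g : NCS k) : aut1 μ g = substE (Agen μ g) := rfl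

lemma smul_e_nil (μ : k) (i : Fin 2) : (μ • NCS.e i : NCS k) [] = 0 := by
  rw [NCS.smul_apply, show (NCS.e i : NCS k) [] = 0 from by simp [NCS.e], mul_zero]

lemma smul_e_single (μ : k) (i j : Fin 2) :
    (μ • NCS.e i : NCS k) [j] = if j = i then μ else 0 := by
  rw [NCS.smul_apply]
  by_cases h : j = i
  · simp [h, NCS.e]
  · have : ([j] : Word) ≠ [i] := by simpa using h
    simp [NCS.e, this, h]

lemma Agen_zero (μ : k) (g : NCS k) :
    Agen μ g 0 = g * (μ • NCS.e 0) * Ring.inverse g := by simp [Agen]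

lemma Agen_one (μ : k) (g : NCS k) : Agen μ g 1 = μ • NCS.e 1 := by
  simp [Agen]

lemma CF_Agen (μ : k) (g : NCS k) : CF (Agen μ g) := by
  intro i
  fin_cases i
  · rw [show (⟨0, by omega⟩ : Fin 2) = 0 from rfl, Agen_zero, NCS.mul_apply_nil,
      NCS.mul_apply_nil, smul_e_nil, mul_zero, zero_mul]
  · rw [show (⟨1, by omega⟩ : Fin 2) = 1 from rfl, Agen_one, smul_e_nil]

lemma htop_Agen {g : NCS k} (hg1 : g [] = 1) (μ : k) :
    ∀ i j : Fin 2, Agen μ g i [j] = if j = i then μ else 0 := by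
  intro i j
  fin_cases i
  · rw [show (⟨0, by omega⟩ : Fin 2) = 0 from rfl, Agen_zero, ringInverse_eq_linv hg1]
    rw [NCS.mul_apply_single, NCS.mul_apply_nil, smul_e_nil, mul_zero, zero_mul,
      NCS.mul_apply_single, smul_e_nil, mul_zero, smul_e_single, hg1, one_mul,
      linv_nil, mul_one, zero_add, add_zero]
  · rw [show (⟨1, by omega⟩ : Fin 2) = 1 from rfl, Agen_one, smul_e_single]

lemma prim_Agen {g : NCS k} (hg : IsGrouplike g) (μ : k) :
    ∀ i : Fin 2, IsPrim (Agen μ g i) := by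
  intro i
  fin_cases i
  · rw [show (⟨0, by omega⟩ : Fin 2) = 0 from rfl, Agen_zero, ringInverse_eq_linv hg.1]
    exact prim_conj hg (prim_smul μ (prim_e 0))
  · rw [show (⟨1, by omega⟩ : Fin 2) = 1 from rfl, Agen_one]
    exact prim_smul μ (prim_e 1)

/-- the composition cocycle -/
lemma comp_key {g g' : NCS k} (hg1 : g [] = 1) (hg'1 : g' [] = 1) (μ μ' : k) (f : NCS k) :
    aut1 μ g (aut1 μ' g' f) = aut1 (μ * μ') (aut1 μ g g' * g) f := by
  rw [aut1_eq μ g, aut1_eq μ' g', aut1_eq (μ * μ')]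
  rw [← substE_comp (CF_Agen μ g) (CF_Agen μ' g') f]
  have hgen : (fun i => substE (Agen μ g) (Agen μ' g' i))
      = Agen (μ * μ') (substE (Agen μ g) g' * g) := by
    funext i
    have hB1 : substE (Agen μ g) g' * substE (Agen μ g) (linv g') = 1 := by
      rw [← substE_mul (CF_Agen μ g), mul_linv hg'1, substE_one]
    have hB2 : substE (Agen μ g) (linv g') * substE (Agen μ g) g' = 1 := by
      rw [← substE_mul (CF_Agen μ g), linv_mul hg'1, substE_one]
    fin_cases i
    · have hinvG : Ring.inverse (substE (Agen μ g) g' * g)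
          = linv g * substE (Agen μ g) (linv g') := by
        refine ringInverse_eq_of _ _ ?_ ?_
        · calc substE (Agen μ g) g' * g * (linv g * substE (Agen μ g) (linv g'))
              = substE (Agen μ g) g' * ((g * linv g) * substE (Agen μ g) (linv g')) := by
                simp only [mul_assoc]
            _ = 1 := by rw [mul_linv hg1, one_mul, hB1]
        · calc linv g * substE (Agen μ g) (linv g') * (substE (Agen μ g) g' * g)
              = linv g * ((substE (Agen μ g) (linv g') * substE (Agen μ g) g') * g) := by
                simp only [mul_assoc]
            _ = 1 := by rw [hB2, one_mul, linv_mul hg1]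
      rw [show (⟨0, by omega⟩ : Fin 2) = 0 from rfl, Agen_zero, Agen_zero,
        ringInverse_eq_linv hg'1, hinvG,
        substE_mul (CF_Agen μ g), substE_mul (CF_Agen μ g), substE_smul,
        substE_e (CF_Agen μ g), Agen_zero, ringInverse_eq_linv hg1]
      simp only [smul_mul_assoc, mul_smul_comm, smul_smul, mul_assoc]
      rw [mul_comm μ' μ]
    · rw [show (⟨1, by omega⟩ : Fin 2) = 1 from rfl, Agen_one, Agen_one, substE_smul,
        substE_e (CF_Agen μ g), Agen_one, smul_smul, mul_comm μ' μ]
  rw [hgen]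

lemma law_assoc_general {μ μ' μ'' : k} {g g' g'' : NCS k}
    (hg1 : g [] = 1) (hg'1 : g' [] = 1) :
    lawDR (lawDR (μ, g) (μ', g')) (μ'', g'') = lawDR (μ, g) (lawDR (μ', g') (μ'', g'')) := by
  unfold lawDR aut10
  refine Prod.ext (mul_assoc μ μ' μ'') ?_
  show aut1 (μ * μ') (aut1 μ g g' * g) g'' * (aut1 μ g g' * g)
      = aut1 μ g (aut1 μ' g' g'' * g') * g
  rw [← comp_key hg1 hg'1]
  rw [aut1_eq μ g, substE_mul (CF_Agen μ g)]
  rw [mul_assoc]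


/-- The operation `(μ,g) ⊛ (μ',g') := (μμ', aut_{(μ,g)}^{(10)}(g'))` defines a
group structure on `G^DR(k) = k^× × 𝒢(V̂^DR)`: it is closed on `G^DR(k)`,
associative, with unit `(1,1)` and inverses. -/
theorem stmt12 :
    (∀ p ∈ GDR k, ∀ q ∈ GDR k, lawDR p q ∈ GDR k) ∧
    (∀ p ∈ GDR k, ∀ q ∈ GDR k, ∀ r ∈ GDR k,
      lawDR (lawDR p q) r = lawDR p (lawDR q r)) ∧
    ((1, (1 : NCS k)) ∈ GDR k) ∧
    (∀ p ∈ GDR k, lawDR (1, (1 : NCS k)) p = p ∧ lawDR p (1, (1 : NCS k)) = p) ∧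
    (∀ p ∈ GDR k, ∃ q ∈ GDR k,
      lawDR p q = (1, (1 : NCS k)) ∧ lawDR q p = (1, (1 : NCS k))) := by
  have haut1 : ∀ (μ : k) (g f : NCS k), aut1 μ g f = substE (Agen μ g) f :=
    fun μ g f => rfl
  refine ⟨?_, ?_, ?_, ?_, ?_⟩
  · -- closure
    rintro ⟨μ, g⟩ ⟨hμ, hg⟩ ⟨μ', g'⟩ ⟨hμ', hg'⟩
    replace hg : IsGrouplike g := hg
    replace hg' : IsGrouplike g' := hg'
    refine ⟨hμ.mul hμ', ?_⟩
    show IsGrouplike (aut10 μ g g')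
    unfold aut10
    rw [haut1]
    exact (substE_grouplike (CF_Agen μ g) (prim_Agen hg μ) hg').mul hg
  · -- associativity
    rintro ⟨μ, g⟩ ⟨hμ, hg⟩ ⟨μ', g'⟩ ⟨hμ', hg'⟩ ⟨μ'', g''⟩ ⟨hμ'', hg''⟩
    replace hg : IsGrouplike g := hg
    replace hg' : IsGrouplike g' := hg'
    exact law_assoc_general hg.1 hg'.1
  · exact ⟨isUnit_one, IsGrouplike.one⟩
  · -- units
    rintro ⟨μ, g⟩ ⟨hμ, hg⟩
    replace hg : IsGrouplike g := hg
    constructor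
    · unfold lawDR aut10
      refine Prod.ext (one_mul μ) ?_
      show aut1 1 1 g * 1 = g
      rw [mul_one, haut1]
      rw [show Agen (1 : k) (1 : NCS k) = NCS.e from ?_]
      · exact substE_id g
      · funext i
        fin_cases i
        · rw [show (⟨0, by omega⟩ : Fin 2) = 0 from rfl, Agen_zero, Ring.inverse_one,
            one_smul, one_mul, mul_one]
        · rw [show (⟨1, by omega⟩ : Fin 2) = 1 from rfl, Agen_one, one_smul]
    · unfold lawDR aut10
      refine Prod.ext (mul_one μ) ?_
      show aut1 μ g 1 * g = g
      rw [haut1, substE_one, one_mul]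
  · -- inverses
    rintro ⟨μ, g⟩ ⟨hμ, hg⟩
    replace hg : IsGrouplike g := hg
    replace hμ : IsUnit μ := hμ
    obtain ⟨u, hu⟩ := hμ
    have hu' : (u : k) = μ := hu
    set ν : k := ((u⁻¹ : kˣ) : k) with hν
    have hμν : μ * ν = 1 := by rw [← hu', hν]; exact_mod_cast u.mul_inv
    set x : NCS k := sol (Agen μ g) ν (linv g) with hx
    have hBx : substE (Agen μ g) x = linv g :=
      substE_sol (CF_Agen μ g) (htop_Agen hg.1 μ) hμν (linv g)
    have hx1 : x [] = 1 := by
      have := congrFun hBx []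
      rw [substE_apply_nil] at this
      rw [this, linv_nil]
    have hxg : IsGrouplike x := by
      refine ⟨hx1, ?_⟩
      have := dsq_unique (CF_Agen μ g) (htop_Agen hg.1 μ) hμν
        (fun u' v' => Dsum x u' v') (fun u' v' => x u' * x v') ?_
      · exact fun u' v' => this u' v'
      · intro u' v'
        rw [← Dsum_substE (CF_Agen μ g) (prim_Agen hg μ) x u' v']
        have hlg : IsGrouplike (linv g) := IsGrouplike.linv_grouplike hg
        rw [show Dsum (substE (Agen μ g) x) u' v' = linv g u' * linv g v' from by
          rw [hBx]; exact hlg.2 u' v']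
        set N := u'.length + v'.length with hN
        rw [show (linv g : NCS k) u' = substE (Agen μ g) x u' from by rw [hBx],
          show (linv g : NCS k) v' = substE (Agen μ g) x v' from by rw [hBx]]
        rw [substE_apply_le (n := N) (CF_Agen μ g) x (by omega),
          substE_apply_le (n := N) (CF_Agen μ g) x (by omega),
          Finset.sum_mul_sum, ← Finset.sum_product']
        refine Finset.sum_congr rfl fun p _ => ?_
        ring
    refine ⟨(ν, x), ⟨⟨u⁻¹, rfl⟩, hxg⟩, ?_, ?_⟩
    · unfold lawDR aut10
      refine Prod.ext hμν ?_
      show aut1 μ g x * g = 1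
      rw [haut1, hBx, linv_mul hg.1]
    · have hqp1 : lawDR (μ, g) (lawDR (ν, x) (μ, g)) = (μ, g) := by
        rw [← law_assoc_general hg.1 hx1]
        rw [show lawDR (μ, g) (ν, x) = ((1 : k), (1 : NCS k)) from ?_]
        · unfold lawDR aut10
          refine Prod.ext (one_mul μ) ?_
          show aut1 1 1 g * 1 = g
          rw [mul_one, haut1]
          rw [show Agen (1 : k) (1 : NCS k) = NCS.e from ?_]
          · exact substE_id g
          · funext i
            fin_cases i
            · rw [show (⟨0, by omega⟩ : Fin 2) = 0 from rfl, Agen_zero, Ring.inverse_one,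
                one_smul, one_mul, mul_one]
            · rw [show (⟨1, by omega⟩ : Fin 2) = 1 from rfl, Agen_one, one_smul]
        · unfold lawDR aut10
          refine Prod.ext hμν ?_
          show aut1 μ g x * g = 1
          rw [haut1, hBx, linv_mul hg.1]
      have hsnd := congrArg Prod.snd hqp1
      have hz : aut1 μ g (aut1 ν x g * x) * g = g := hsnd
      have hz1 : aut1 μ g (aut1 ν x g * x) = 1 := by
        have := congrArg (fun y => y * linv g) hz
        rw [mul_assoc, mul_linv hg.1, mul_one] at this
        exact this
      have hz2 : aut1 ν x g * x = 1 := by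
        refine substE_inj_top (CF_Agen μ g) (htop_Agen hg.1 μ) hμν ?_
        rw [← haut1, hz1, substE_one]
      unfold lawDR aut10
      refine Prod.ext (by rw [mul_comm]; exact hμν) hz2
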